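/- arXiv:1808.02755 — 3 statements merged into one kernel-verified Lean document; each statement's English description precedes it below -/
import Mathlib

section
/- Define a sequence s by s(0)=0, s(1)=1 and s(n)=3·s(n−1) − s(n−2) + C(n,2) + 1 for n ≥ 2, where C(n,2) is the binomial coefficient 'n choose 2'. Then for every n ≥ 1, s(n) = Σ_{i=1}^{n} (C(n+1−i, 2) + 1) · F(2i), where F is the Fibonacci sequence. -/
/-!
The weights `F(2i)` satisfy `F(2i + 4) = 3 F(2i + 2) - F(2i)` with `F(0) = 0`, `F(2) = 1`, so
convolving any sequence `g` with them inverts the operator `u(n) ↦ u(n) - 3 u(n-1) + u(n-2)`: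
the convolution satisfies the recurrence of `s` with inhomogeneous term `g`. With
`g(n) = C(n, 2) + 1` both sides of the formula obey the same recurrence and initial values.
-/

open Finset

def s : ℕ → ℤ
  | 0 => 0
  | 1 => 1
  | (n + 2) => 3 * s (n + 1) - s n + (Nat.choose (n + 2) 2 : ℤ) + 1

theorem Finset.Nat.sum_antidiagonal_add_two_of_recurrence {R : Type*} [CommSemiring R]
    (a b : R) (g e : ℕ → R) (he0 : e 0 = 0) (he1 : e 1 = 1)
    (he : ∀ k, e (k + 2) = a * e (k + 1) + b * e k) (n : ℕ) :
    ∑ p ∈ antidiagonal (n + 2), g p.1 * e p.2 =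
      a * ∑ p ∈ antidiagonal (n + 1), g p.1 * e p.2 + b * ∑ p ∈ antidiagonal n, g p.1 * e p.2
        + g (n + 1) := by
  rw [Nat.sum_antidiagonal_succ', Nat.sum_antidiagonal_succ', Nat.sum_antidiagonal_succ' (n := n)]
  simp only [he0, he1, he, mul_add, sum_add_distrib, mul_sum, mul_left_comm (g _)]
  ring

theorem natCast_fib_two_mul_succ_succ (k : ℕ) :
    (Nat.fib (2 * (k + 2)) : ℤ) = 3 * Nat.fib (2 * (k + 1)) - Nat.fib (2 * k) := by
  have h₁ := Nat.fib_add_two (n := 2 * k)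
  have h₂ := Nat.fib_add_two (n := 2 * k + 1)
  have h₃ := Nat.fib_add_two (n := 2 * k + 2)
  rw [show 2 * (k + 2) = 2 * k + 4 by ring, show 2 * (k + 1) = 2 * k + 2 by ring]
  push_cast [h₁, h₂, h₃] at *
  linarith

theorem s_eq_sum_antidiagonal (n : ℕ) :
    s n = ∑ p ∈ antidiagonal n, ((Nat.choose (p.1 + 1) 2 : ℤ) + 1) * Nat.fib (2 * p.2) := by
  induction n using Nat.twoStepInduction with
  | zero => simp [s]
  | one => simp [s, Nat.sum_antidiagonal_succ]
  | more n ih₀ ih₁ =>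
    rw [Nat.sum_antidiagonal_add_two_of_recurrence 3 (-1)
      (fun i ↦ (Nat.choose (i + 1) 2 : ℤ) + 1) (fun k ↦ (Nat.fib (2 * k) : ℤ))
      (by simp) (by simp) (fun k ↦ by rw [natCast_fib_two_mul_succ_succ]; ring), ← ih₀, ← ih₁, s]
    ring

theorem s_formula_general (n : ℕ) :
    s n = ∑ i ∈ Finset.Icc 1 n,
      ((Nat.choose (n + 1 - i) 2 : ℤ) + 1) * (Nat.fib (2 * i) : ℤ) := by
  rw [s_eq_sum_antidiagonal, ← Nat.sum_antidiagonal_swap]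
  simp only [Prod.fst_swap, Prod.snd_swap]
  rw [Nat.sum_antidiagonal_eq_sum_range_succ
      (fun j i ↦ ((Nat.choose (i + 1) 2 : ℤ) + 1) * Nat.fib (2 * j)), range_eq_Ico, sum_eq_sum_Ico_succ_bot n.succ_pos]
  simp only [mul_zero, Nat.fib_zero, Nat.cast_zero, zero_add]
  refine sum_congr rfl fun i hi ↦ ?_
  rw [Nat.sub_add_comm (mem_Icc.mp hi).2]

theorem s_formula (n : ℕ) (hn : 1 ≤ n) :
    s n = ∑ i ∈ Finset.Icc 1 n,
      ((Nat.choose (n + 1 - i) 2 : ℤ) + 1) * (Nat.fib (2 * i) : ℤ) :=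
  s_formula_general n
end

section
/- Let R be a square matrix over the reals with nonnegative entries, and let λ be a positive real number strictly greater than the spectral radius of R. Then the matrix λI − R is invertible and all entries of (λI − R)⁻¹ are nonnegative. -/
/-!
Put `B = λ⁻¹ R`. The complexification of `B` has spectrum in the open unit disc, so by the
holomorphy of the resolvent the Neumann series `∑ Bᵏ` converges. Its sum inverts `1 - B`, and it
has nonnegative entries because every `Bᵏ` does. Hence `(λI - R)⁻¹ = λ⁻¹ ∑ Bᵏ ≥ 0`.
-/

open scoped ENNReal

/-- The resolvent `z ↦ (1 - z • a)⁻¹` is holomorphic on the disc of radius `ρ(a)⁻¹ > 1`, so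
its Taylor series `∑ zⁿ aⁿ` converges at `z = 1`. -/
theorem summable_pow_of_spectralRadius_lt_one {A : Type*} [NormedRing A] [NormedAlgebra ℂ A]
    [CompleteSpace A] {a : A} (ha : spectralRadius ℂ a < 1) : Summable (a ^ ·) := by
  obtain ⟨r, hr1, hr⟩ :
      ∃ r : NNReal, (1 : ℝ≥0∞) < r ∧ (r : ℝ≥0∞) < (spectralRadius ℂ a)⁻¹ :=
    ENNReal.lt_iff_exists_nnreal_btwn.mp (ENNReal.one_lt_inv.mpr ha)
  have hball := (spectrum.hasFPowerSeriesOnBall_inverse_one_sub_smul ℂ a).exchange_radius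
    ((spectrum.differentiableOn_inverse_one_sub_smul hr).hasFPowerSeriesOnBall
      (zero_lt_one.trans (by exact_mod_cast hr1)))
  simpa using (hball.hasSum (y := 1) (by simpa using hr1)).summable

theorem spectralRadius_lt_one_of_forall_norm_lt_one {A : Type*} [NormedRing A]
    [NormedAlgebra ℂ A] [CompleteSpace A] {a : A} (h : ∀ z ∈ spectrum ℂ a, ‖z‖ < 1) :
    spectralRadius ℂ a < 1 := by
  rcases (spectrum ℂ a).eq_empty_or_nonempty with hempty | hne
  · simp [spectralRadius, hempty]
  · exact_mod_cast spectrum.spectralRadius_lt_of_forall_lt_of_nonempty hne (r := 1)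
      fun z hz => by simpa [← NNReal.coe_lt_coe] using h z hz

theorem spectrum.norm_lt_one_of_inv_smul {A : Type*} [Ring A] [Algebra ℂ A] {a : A} {c : ℝ}
    (hc : 0 < c) (h : ∀ z ∈ spectrum ℂ a, ‖z‖ < c) :
    ∀ z ∈ spectrum ℂ ((c⁻¹ : ℂ) • a), ‖z‖ < 1 := by
  have hc' : (c⁻¹ : ℂ) ≠ 0 := by exact_mod_cast (inv_pos.mpr hc).ne'
  rw [← Units.val_mk0 hc', ← Units.smul_def, spectrum.unit_smul_eq_smul]
  rintro _ ⟨z, hz, rfl⟩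
  simp only [Units.val_mk0, smul_eq_mul, norm_mul, norm_inv, Complex.norm_real,
    Real.norm_of_nonneg hc.le, inv_mul_lt_one₀ hc]
  exact h z hz

theorem Matrix.summable_pow_of_map_ofReal {n : Type*} [Fintype n] [DecidableEq n]
    {B : Matrix n n ℝ} (h : ∀ z ∈ spectrum ℂ (B.map Complex.ofReal), ‖z‖ < 1) :
    Summable (B ^ ·) := by
  have hsum : Summable (B.map Complex.ofReal ^ ·) := by
    -- any Banach algebra norm will do; summability only depends on the topology
    let := Matrix.linftyOpNormedRing (n := n) (α := ℂ)
    let := Matrix.linftyOpNormedAlgebra (n := n) (α := ℂ) (R := ℂ)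
    have : CompleteSpace (Matrix n n ℂ) := FiniteDimensional.complete ℂ _
    exact summable_pow_of_spectralRadius_lt_one (spectralRadius_lt_one_of_forall_norm_lt_one h)
  rw [← Summable.map_iff_of_leftInverse Complex.ofRealHom.mapMatrix.toAddMonoidHom
    Complex.reAddGroupHom.mapMatrix (continuous_id.matrix_map Complex.continuous_ofReal)
    (continuous_id.matrix_map Complex.continuous_re) fun M => by ext; simp]
  simp only [Function.comp_def, RingHom.toAddMonoidHom_eq_coe, AddMonoidHom.coe_coe, map_pow]
  exact hsum

theorem inverse_nonneg (m : ℕ) (R : Matrix (Fin m) (Fin m) ℝ)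
    (hR : ∀ i j, 0 ≤ R i j) (lam : ℝ) (hlam : 0 < lam)
    (hspec : ∀ μ : ℂ, μ ∈ spectrum ℂ (R.map (Complex.ofReal)) → ‖μ‖ < lam) :
    IsUnit (lam • (1 : Matrix (Fin m) (Fin m) ℝ) - R) ∧
      ∀ i j, 0 ≤ ((lam • (1 : Matrix (Fin m) (Fin m) ℝ) - R)⁻¹) i j := by
  set B := lam⁻¹ • R
  have hB : ∀ i j, 0 ≤ B i j := fun i j => mul_nonneg (inv_nonneg.mpr hlam.le) (hR i j)
  have hsum : Summable (B ^ ·) := by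
    refine Matrix.summable_pow_of_map_ofReal ?_
    have := spectrum.norm_lt_one_of_inv_smul hlam hspec
    rwa [← Complex.ofReal_inv, Complex.coe_smul, ← Matrix.map_smul _ _ fun x => by simp] at this
  have hinv : (lam • 1 - R) * (lam⁻¹ • ∑' k, B ^ k) = 1 := by
    rw [show lam • 1 - R = lam • (1 - B) by simp [B, smul_sub, hlam.ne'], smul_mul_smul,
      mul_inv_cancel₀ hlam.ne', one_smul, hsum.one_sub_mul_tsum_pow]
  refine ⟨.of_mul_eq_one _ hinv, fun i j => ?_⟩
  rw [Matrix.inv_eq_right_inv hinv, Matrix.smul_apply]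
  exact mul_nonneg (inv_nonneg.mpr hlam.le)
    ((Pi.hasSum.mp (Pi.hasSum.mp hsum.hasSum i) j).nonneg fun k => Matrix.pow_apply_nonneg hB k i j)
end

section
/- Let R₂ be the 4×4 matrix with rows (1,0,1,0), (1,0,0,0), (0,0,0,1), (0,1,0,1). Then the golden ratio φ = (1+√5)/2 is an eigenvalue of R₂, and the row vector v = (φ, 1, 1, φ) satisfies v·R₂ = φ·v. -/
noncomputable def R₂ : Matrix (Fin 4) (Fin 4) ℝ :=
  !![1, 0, 1, 0; 1, 0, 0, 0; 0, 0, 0, 1; 0, 1, 0, 1]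

noncomputable def φ : ℝ := (1 + Real.sqrt 5) / 2

open Matrix

theorem mem_spectrum_of_vecMul_eq_smul {n K : Type*} [Fintype n] [DecidableEq n]
    [Field K] {A : Matrix n n K} {μ : K} {v : n → K} (hv : v ≠ 0) (h : v ᵥ* A = μ • v) :
    μ ∈ spectrum K A := by
  have hker : v ᵥ* (algebraMap K (Matrix n n K) μ - A) = 0 := by
    rw [vecMul_sub, h, Algebra.algebraMap_eq_smul_one, vecMul_smul, vecMul_one, sub_self]
  rw [spectrum.mem_iff, isUnit_iff_isUnit_det, isUnit_iff_ne_zero, not_not]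
  exact exists_vecMul_eq_zero_iff.mp ⟨v, hv, hker⟩

theorem vecMul_R₂_eigenvector : ![φ, 1, 1, φ] ᵥ* R₂ = φ • ![φ, 1, 1, φ] := by
  -- `φ` unfolds to Mathlib's `Real.goldenRatio`
  have hφ : φ ^ 2 = φ + 1 := Real.goldenRatio_sq
  ext j
  fin_cases j <;> simp [R₂, vecMul, dotProduct, Fin.sum_univ_four] <;> linarith

theorem golden_ratio_eigenvalue :
    φ ∈ spectrum ℝ R₂ ∧
      Matrix.vecMul ![φ, 1, 1, φ] R₂ = φ • ![φ, 1, 1, φ] := by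
  have hv : ![φ, 1, 1, φ] ≠ 0 := fun h => one_ne_zero (congrFun h 1)
  exact ⟨mem_spectrum_of_vecMul_eq_smul hv vecMul_R₂_eigenvector, vecMul_R₂_eigenvector⟩
end
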